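/- (Explicit Rayleigh's Monotonicity Law I) Let G be a finite connected weighted graph and let e_i be an edge of G with endpoints p_i, q_i and length L_i. If e_i is not a bridge, then for all vertices s, t of G: r_G(s,t) = r_{Ḡ_i}(s,t) + ((L_i + R_i)/(L_i·R_i))·( j_{p_i}(q_i,s) − j_{p_i}(q_i,t) )² = r_{Ḡ_i}(s,t) + (L_i/(R_i·(L_i + R_i)))·( j_{p_i}^{G−e_i}(q_i,s) − j_{p_i}^{G−e_i}(q_i,t) )²; in particular r_G(s,t) ≥ r_{Ḡ_i}(s,t), with equality if and only if j_{p_i}(q_i,s) = j_{p_i}(q_i,t). If e_i is a bridge, then r_G(s,t) = r_{Ḡ_i}(s,t) when s and t lie in the same connected component of G−e_i, and r_G(s,t) = r_{Ḡ_i}(s,t) + L_i otherwise. -/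

import Mathlib

open scoped Classical

/-- A finite weighted multigraph (resistive electrical network): finitely many
vertices and edges; each edge `e` has two endpoints `ends e` and a positive
length (resistance) `len e`.  Multiple edges and self-loops are allowed. -/
structure WMG where
  V : Type
  E : Type
  instV : Fintype V
  instE : Fintype E
  ends : E → V × V
  len : E → ℝ
  len_pos : ∀ e, 0 < len e

attribute [instance] WMG.instV WMG.instE

/-- The Moore–Penrose pseudoinverse of a real square matrix, characterized by
the four Penrose equations (it exists and is unique for real matrices). -/
noncomputable def Matrix.mpinv {n : Type} [Fintype n] (A : Matrix n n ℝ) : Matrix n n ℝ :=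
  if h : ∃ B : Matrix n n ℝ,
      A * B * A = A ∧ B * A * B = B ∧ Matrix.transpose (A * B) = A * B ∧ Matrix.transpose (B * A) = B * A
  then h.choose else 0

namespace WMG

/-- Indicator function. -/
noncomputable def ind {α : Type} (x y : α) : ℝ := if x = y then 1 else 0

/-- The weighted Laplacian: an edge `e` with endpoints `a, b` contributes
`(1/len e) * (δ_{ua} - δ_{ub}) * (δ_{va} - δ_{vb})` to the `(u,v)` entry.  So
the off-diagonal `(u,v)` entry is `-∑ 1/len e` over the edges joining `u` and
`v`, and all row sums are zero. -/
noncomputable def lap (G : WMG) : Matrix G.V G.V ℝ :=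
  ∑ e : G.E, (G.len e)⁻¹ •
    Matrix.of (fun u v : G.V =>
      (ind u (G.ends e).1 - ind u (G.ends e).2) *
      (ind v (G.ends e).1 - ind v (G.ends e).2))

/-- Effective resistance `r(p,q) = L⁺pp - 2·L⁺pq + L⁺qq`. -/
noncomputable def res (G : WMG) (p q : G.V) : ℝ :=
  G.lap.mpinv p p - 2 * G.lap.mpinv p q + G.lap.mpinv q q

/-- Voltage function `j_p(q,s) = L⁺pp - L⁺pq - L⁺ps + L⁺qs`. -/
noncomputable def volt (G : WMG) (p q s : G.V) : ℝ :=
  G.lap.mpinv p p - G.lap.mpinv p q - G.lap.mpinv p s + G.lap.mpinv q s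

/-- Two vertices are adjacent if some edge has them as its endpoints. -/
def Adj (G : WMG) (u v : G.V) : Prop :=
  ∃ e : G.E, G.ends e = (u, v) ∨ G.ends e = (v, u)

/-- `u` and `v` are joined by a walk in `G`. -/
def Reach (G : WMG) (u v : G.V) : Prop := Relation.ReflTransGen G.Adj u v

/-- `G` is connected. -/
def Connected (G : WMG) : Prop := Nonempty G.V ∧ ∀ u v : G.V, G.Reach u v

/-- Quotient graph: identify vertices along (the equivalence generated by) the
relation `r`; all edges are kept. -/
noncomputable def quot (G : WMG) (r : G.V → G.V → Prop) : WMG where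
  V := Quot r
  E := G.E
  instV := Fintype.ofFinite _
  instE := G.instE
  ends e := (Quot.mk r (G.ends e).1, Quot.mk r (G.ends e).2)
  len := G.len
  len_pos := G.len_pos

/-- The canonical map from the vertices of `G` to those of a quotient of `G`. -/
def quotMap (G : WMG) (r : G.V → G.V → Prop) : G.V → (G.quot r).V := Quot.mk r

/-- `G_{pq}`: identify the vertices `p` and `q`. -/
noncomputable def ident2 (G : WMG) (p q : G.V) : WMG :=
  G.quot (fun x y => x = p ∧ y = q)

def ident2Map (G : WMG) (p q : G.V) : G.V → (G.ident2 p q).V :=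
  G.quotMap _

/-- `G_{pqs}`: identify the vertices `p`, `q`, `s` into a single vertex. -/
noncomputable def ident3 (G : WMG) (p q s : G.V) : WMG :=
  G.quot (fun x y => (x = p ∧ y = q) ∨ (x = p ∧ y = s))

/-- `G_{pq,st}`: identify `p` with `q` and, separately, `s` with `t`. -/
noncomputable def ident22 (G : WMG) (p q s t : G.V) : WMG :=
  G.quot (fun x y => (x = p ∧ y = q) ∨ (x = s ∧ y = t))

/-- `G_S`: identify all vertices in the set `S` into a single vertex. -/
noncomputable def identSet (G : WMG) (S : Set G.V) : WMG :=
  G.quot (fun x y => x ∈ S ∧ y ∈ S)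

/-- `G − e`: delete the edge `e` (keeping all vertices). -/
noncomputable def delete (G : WMG) (e : G.E) : WMG where
  V := G.V
  E := {f : G.E // f ≠ e}
  instV := G.instV
  instE := Fintype.ofFinite _
  ends f := G.ends f.1
  len f := G.len f.1
  len_pos f := G.len_pos f.1

/-- `e` is a bridge if `G − e` is disconnected. -/
def IsBridge (G : WMG) (e : G.E) : Prop := ¬ (G.delete e).Connected

/-- `Ḡ_e`: contract the edge `e` (identify its endpoints and delete it). -/
noncomputable def contract (G : WMG) (e : G.E) : WMG :=
  (G.delete e).quot (fun x y => x = (G.ends e).1 ∧ y = (G.ends e).2)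

def contractMap (G : WMG) (e : G.E) : G.V → (G.contract e).V := Quot.mk _

/-- Replace the length of the edge `e` by `L'`. -/
noncomputable def setLen (G : WMG) (e : G.E) (L' : ℝ) (hL' : 0 < L') : WMG where
  V := G.V
  E := G.E
  instV := G.instV
  instE := G.instE
  ends := G.ends
  len f := if f = e then L' else G.len f
  len_pos f := by
    by_cases hf : f = e
    · simpa [hf] using hL'
    · simpa [hf] using G.len_pos f

/-- `T` is (the edge set of) a spanning tree of `G`: using only edges of `T`
any two vertices are joined, and `T` has (number of vertices) − 1 edges. -/
def IsSpanningTree (G : WMG) (T : Finset G.E) : Prop :=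
  (∀ u v : G.V, Relation.ReflTransGen
      (fun x y => ∃ e ∈ T, G.ends e = (x, y) ∨ G.ends e = (y, x)) u v) ∧
  T.card = Fintype.card G.V - 1

/-- `t G`: the number of spanning trees of `G` (equals `1` for a one-vertex
graph; self-loops contribute nothing). -/
noncomputable def t (G : WMG) : ℕ := Nat.card {T : Finset G.E // G.IsSpanningTree T}

/-- `t(G_{pq})`, with the convention `t(G_{pp}) = 0`. -/
noncomputable def t2 (G : WMG) (p q : G.V) : ℕ :=
  if p = q then 0 else (G.ident2 p q).t

/-- Disjoint union of two graphs. -/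
noncomputable def disjUnion (G₁ G₂ : WMG) : WMG where
  V := G₁.V ⊕ G₂.V
  E := G₁.E ⊕ G₂.E
  instV := inferInstance
  instE := inferInstance
  ends := Sum.elim (fun e => (Sum.inl (G₁.ends e).1, Sum.inl (G₁.ends e).2))
                   (fun e => (Sum.inr (G₂.ends e).1, Sum.inr (G₂.ends e).2))
  len := Sum.elim G₁.len G₂.len
  len_pos := by
    rintro (e | e)
    · exact G₁.len_pos e
    · exact G₂.len_pos e

/-- Glue `G₁` and `G₂` along two pairs of vertices (`p₁ ↔ p₂`, `q₁ ↔ q₂`):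
the result is the graph `G = G₁ ∪ G₂` with `G₁ ∩ G₂ = {p, q}` (the two pieces
share exactly these two vertices and no edges). -/
noncomputable def glue2 (G₁ G₂ : WMG) (p₁ q₁ : G₁.V) (p₂ q₂ : G₂.V) : WMG :=
  (G₁.disjUnion G₂).quot (fun x y =>
    (x = Sum.inl p₁ ∧ y = Sum.inr p₂) ∨ (x = Sum.inl q₁ ∧ y = Sum.inr q₂))

/-- Glue `G₁` and `G₂` along three pairs of vertices: the result is the graph
`G = G₁ ∪ G₂` with `G₁ ∩ G₂ = {p, q, s}`. -/
noncomputable def glue3 (G₁ G₂ : WMG) (p₁ q₁ s₁ : G₁.V) (p₂ q₂ s₂ : G₂.V) : WMG :=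
  (G₁.disjUnion G₂).quot (fun x y =>
    (x = Sum.inl p₁ ∧ y = Sum.inr p₂) ∨ (x = Sum.inl q₁ ∧ y = Sum.inr q₂) ∨
    (x = Sum.inl s₁ ∧ y = Sum.inr s₂))

/-- Disjoint union of a finite family of graphs. -/
noncomputable def sigmaGraph {k : ℕ} (G : Fin k → WMG) : WMG where
  V := Σ i, (G i).V
  E := Σ i, (G i).E
  instV := inferInstance
  instE := inferInstance
  ends e := (⟨e.1, ((G e.1).ends e.2).1⟩, ⟨e.1, ((G e.1).ends e.2).2⟩)
  len e := (G e.1).len e.2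
  len_pos e := (G e.1).len_pos e.2

/-- Glue the family `G i` along a common pair of vertices (all the `p i` are
identified together, and all the `q i` are identified together): the result is
`G = ⋃ G_i` with `G_i ∩ G_j = {p, q}` for all `i ≠ j`. -/
noncomputable def glueFam {k : ℕ} (G : Fin k → WMG) (p q : ∀ i, (G i).V) : WMG :=
  (sigmaGraph G).quot (fun x y =>
    (∃ i j, x = ⟨i, p i⟩ ∧ y = ⟨j, p j⟩) ∨ (∃ i j, x = ⟨i, q i⟩ ∧ y = ⟨j, q j⟩))

/-- The cyclic successor on `Fin k`. -/
def finSucc {k : ℕ} (i : Fin k) : Fin k :=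
  ⟨(i.1 + 1) % k, Nat.mod_lt _ (Nat.lt_of_le_of_lt (Nat.zero_le _) i.2)⟩

/-- `CG_k`: replace the `i`-th edge of the cycle `C_k` by the graph `G i`,
identifying `t i` (of `G i`) with `s (i+1)` (of `G (i+1)`), cyclically. -/
noncomputable def cycleGlue {k : ℕ} (G : Fin k → WMG) (s t : ∀ i, (G i).V) : WMG :=
  (sigmaGraph G).quot (fun x y =>
    ∃ i, x = ⟨i, t i⟩ ∧ y = ⟨finSucc i, s (finSucc i)⟩)

/-- Join a new vertex `u` (the vertex `none`) to the vertex `p i` of `H` by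
`a i` parallel unit edges, for each `i`.  The resulting graph `G` has `H = G − u`,
and if `p` is injective with all `a i ≥ 1` then `N_G(u) = {p 1, …, p n}` with
`a i` parallel edges joining `u` to `p i`. -/
noncomputable def cone (H : WMG) {n : ℕ} (p : Fin n → H.V) (a : Fin n → ℕ) : WMG where
  V := Option H.V
  E := H.E ⊕ (Σ i : Fin n, Fin (a i))
  instV := inferInstance
  instE := inferInstance
  ends := Sum.elim (fun e => (some (H.ends e).1, some (H.ends e).2))
                   (fun e => (none, some (p e.1)))
  len := Sum.elim H.len (fun _ => 1)
  len_pos := by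
    rintro (e | e)
    · exact H.len_pos e
    · exact one_pos

/-- The path graph `P_n` on `n` vertices `0, 1, …, n-1`, unit edge lengths. -/
noncomputable def path (n : ℕ) : WMG where
  V := Fin n
  E := Fin (n - 1)
  instV := inferInstance
  instE := inferInstance
  ends i := (⟨i.1, by have := i.2; omega⟩, ⟨i.1 + 1, by have := i.2; omega⟩)
  len _ := 1
  len_pos _ := one_pos

/-- The cycle graph `C_n` on `n` vertices, unit edge lengths. -/
noncomputable def cycle (n : ℕ) : WMG where
  V := Fin n
  E := Fin n
  instV := inferInstance
  instE := inferInstance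
  ends i := (i, finSucc i)
  len _ := 1
  len_pos _ := one_pos

/-- The modified fan graph `F̄an_n`: the path `P_n` together with one new hub
vertex joined to each path vertex by `a` parallel edges. -/
noncomputable def fanGraph (n a : ℕ) : WMG :=
  (path n).cone (fun i : Fin n => i) (fun _ => a)

/-- The modified wheel graph `W̄_n`: the cycle `C_n` together with one new hub
vertex joined to each cycle vertex by `a` parallel edges. -/
noncomputable def wheelGraph (n a : ℕ) : WMG :=
  (cycle n).cone (fun i : Fin n => i) (fun _ => a)

end WMG

/-- The Morgan–Voyce polynomial `B_m(x) = ∑_{k=0}^m C(m+k+1, m−k) x^k`. -/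
noncomputable def morganVoyce (m : ℕ) (x : ℝ) : ℝ :=
  ∑ k ∈ Finset.range (m + 1), (Nat.choose (m + k + 1) (m - k) : ℝ) * x ^ k

/-- The polynomial `W_m(x) = ∑_{k=0}^m ((2m+2)/(m+2+k)) C(m+2+k, m−k) x^k`. -/
noncomputable def wheelPoly (m : ℕ) (x : ℝ) : ℝ :=
  ∑ k ∈ Finset.range (m + 1),
    ((2 * m + 2 : ℝ) / (m + 2 + k : ℝ)) * (Nat.choose (m + 2 + k) (m - k) : ℝ) * x ^ k

/-- The Lucas numbers: `L₀ = 2`, `L₁ = 1`, `L_{m+2} = L_m + L_{m+1}`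
(so `L₂ = 3`). -/
def lucas : ℕ → ℕ
  | 0 => 2
  | 1 => 1
  | n + 2 => lucas n + lucas (n + 1)


/-!
Everything is read off potentials. For connected `G`, `L⁺ = (L + J)⁻¹ - J` with `J` the
projection onto the constants, so `r(s,t) = f s - f t` and `j_p(q,s) - j_p(q,t) = f q - f p`
for any `f` with `L f = 𝟙_s - 𝟙_t`.

If `e = pq` is not a bridge, let `f, g` be potentials of `G - e` for the unit currents
`s → t` and `p → q`, so that `R = g p - g q`, and put `D = f p - f q = g s - g t`
(reciprocity). Then `f - D/(L+R) • g` is a potential of `G`, while `f - D/R • g` is constant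
across `e` and descends to a potential of `Ḡ`; hence `r_G = f s - f t - D²/(L+R)` and
`r_Ḡ = f s - f t - D²/R`, whose difference is `L D² / (R (L+R))`.

If `e` is a bridge, `L` times the indicator `χ` of the side of `p` is the potential for `p → q`,
and the same construction gives `r_G - r_Ḡ = L (χ s - χ t)²`.
-/

open Matrix

section Penrose

variable {n : Type} [Fintype n]

theorem Matrix.mpinv_eq_of_penrose {A B : Matrix n n ℝ} (h₁ : A * B * A = A)
    (h₂ : B * A * B = B) (h₃ : (A * B)ᵀ = A * B) (h₄ : (B * A)ᵀ = B * A) :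
    A.mpinv = B := by
  have hex : ∃ B : Matrix n n ℝ,
      A * B * A = A ∧ B * A * B = B ∧ (A * B)ᵀ = A * B ∧ (B * A)ᵀ = B * A :=
    ⟨B, h₁, h₂, h₃, h₄⟩
  rw [Matrix.mpinv, dif_pos hex]
  obtain ⟨g₁, g₂, g₃, g₄⟩ := hex.choose_spec
  set C := hex.choose
  have hAB : Aᵀ = Aᵀ * (A * B) := by
    conv_lhs => rw [← h₁]
    rw [transpose_mul, h₃]
  have hBA : Aᵀ = B * A * Aᵀ := by
    conv_lhs => rw [← h₁, mul_assoc]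
    rw [transpose_mul, h₄]
  have hAC : A * C = A * B := by
    rw [← g₃, transpose_mul, hAB, ← mul_assoc, ← transpose_mul, g₃, ← mul_assoc, g₁]
  have hCA : C * A = B * A := by
    rw [← g₄, transpose_mul, hBA, mul_assoc, ← transpose_mul, g₄, mul_assoc B A,
      ← mul_assoc A C A, g₁]
  rw [← g₂, hCA, mul_assoc, hAC, ← mul_assoc, h₂]

variable [DecidableEq n] {A P : Matrix n n ℝ}

theorem Matrix.mul_inv_add_eq_of_mul_eq_zero (hPA : P * A = 0) (hPP : P * P = P)
    (hA : IsUnit (A + P).det) : P * (A + P)⁻¹ = P :=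
  calc P * (A + P)⁻¹ = P * (A + P) * (A + P)⁻¹ := by rw [mul_add, hPA, hPP, zero_add]
    _ = P := mul_nonsing_inv_cancel_right _ _ hA

theorem Matrix.inv_add_mul_eq_of_mul_eq_zero (hAP : A * P = 0) (hPP : P * P = P)
    (hA : IsUnit (A + P).det) : (A + P)⁻¹ * P = P :=
  calc (A + P)⁻¹ * P = (A + P)⁻¹ * ((A + P) * P) := by rw [add_mul, hAP, hPP, zero_add]
    _ = P := nonsing_inv_mul_cancel_left _ _ hA

theorem Matrix.mul_inv_add_sub (hAP : A * P = 0) (hPA : P * A = 0) (hPP : P * P = P)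
    (hA : IsUnit (A + P).det) : A * ((A + P)⁻¹ - P) = 1 - P :=
  calc A * ((A + P)⁻¹ - P) = (A + P) * (A + P)⁻¹ - P * (A + P)⁻¹ := by
        rw [mul_sub, hAP, sub_zero, add_mul, add_sub_cancel_right]
    _ = 1 - P := by rw [mul_nonsing_inv _ hA, mul_inv_add_eq_of_mul_eq_zero hPA hPP hA]

theorem Matrix.inv_add_sub_mul (hAP : A * P = 0) (hPA : P * A = 0) (hPP : P * P = P)
    (hA : IsUnit (A + P).det) : ((A + P)⁻¹ - P) * A = 1 - P :=
  calc ((A + P)⁻¹ - P) * A = (A + P)⁻¹ * (A + P) - (A + P)⁻¹ * P := by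
        rw [sub_mul, hPA, sub_zero, mul_add, add_sub_cancel_right]
    _ = 1 - P := by rw [nonsing_inv_mul _ hA, inv_add_mul_eq_of_mul_eq_zero hAP hPP hA]

theorem Matrix.mpinv_eq_inv_add_sub (hAP : A * P = 0) (hPA : P * A = 0) (hPP : P * P = P)
    (hP : Pᵀ = P) (hA : IsUnit (A + P).det) : A.mpinv = (A + P)⁻¹ - P := by
  have hPB : P * ((A + P)⁻¹ - P) = 0 := by
    rw [mul_sub, mul_inv_add_eq_of_mul_eq_zero hPA hPP hA, hPP, sub_self]
  apply mpinv_eq_of_penrose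
  · rw [mul_inv_add_sub hAP hPA hPP hA, sub_mul, one_mul, hPA, sub_zero]
  · rw [inv_add_sub_mul hAP hPA hPP hA, sub_mul, one_mul, hPB, sub_zero]
  · rw [mul_inv_add_sub hAP hPA hPP hA, transpose_sub, transpose_one, hP]
  · rw [inv_add_sub_mul hAP hPA hPP hA, transpose_sub, transpose_one, hP]

end Penrose

namespace WMG

section Vectors

variable {V : Type} [Fintype V]

/-- The unit current injected at `s` and extracted at `t`. -/
noncomputable def dipole (s t : V) : V → ℝ := fun x => ind x s - ind x t

theorem dipole_dotProduct (s t : V) (y : V → ℝ) : dipole s t ⬝ᵥ y = y s - y t := by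
  simp [dipole, ind, dotProduct, sub_mul, Finset.sum_sub_distrib]

theorem dotProduct_dipole (y : V → ℝ) (s t : V) : y ⬝ᵥ dipole s t = y s - y t := by
  rw [dotProduct_comm, dipole_dotProduct]

theorem sum_dipole (s t : V) : ∑ x, dipole s t x = 0 := by
  simpa [dotProduct] using dipole_dotProduct s t (fun _ => 1)

theorem dipole_dotProduct_mulVec_dipole (M : Matrix V V ℝ) (p q s t : V) :
    dipole p q ⬝ᵥ M *ᵥ dipole s t = M p s - M p t - (M q s - M q t) := by
  simp only [dipole_dotProduct, mulVec, dotProduct_dipole]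

theorem eq_of_forall_dotProduct_eq {x y : V → ℝ} (h : ∀ w, w ⬝ᵥ x = w ⬝ᵥ y) : x = y :=
  dotProduct_eq _ _ fun w => by rw [dotProduct_comm, h, dotProduct_comm]

/-- The orthogonal projection onto the constant vectors. -/
noncomputable def meanMat (V : Type) [Fintype V] : Matrix V V ℝ :=
  (Fintype.card V : ℝ)⁻¹ • of fun _ _ => 1

theorem meanMat_mulVec (y : V → ℝ) :
    meanMat V *ᵥ y = fun _ => (Fintype.card V : ℝ)⁻¹ * ∑ x, y x := by
  ext; simp [meanMat, mulVec, dotProduct, Finset.mul_sum]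

theorem meanMat_transpose : (meanMat V)ᵀ = meanMat V := by
  ext; simp [meanMat]

theorem meanMat_mul_self [Nonempty V] : meanMat V * meanMat V = meanMat V := by
  ext
  simp [meanMat, Matrix.mul_apply]

end Vectors

variable (G : WMG)

theorem lap_eq_sum_vecMulVec : G.lap = ∑ e, (G.len e)⁻¹ •
    vecMulVec (dipole (G.ends e).1 (G.ends e).2) (dipole (G.ends e).1 (G.ends e).2) := rfl

theorem dotProduct_lap_mulVec (w v : G.V → ℝ) :
    w ⬝ᵥ G.lap *ᵥ v = ∑ e, (G.len e)⁻¹ *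
      ((w (G.ends e).1 - w (G.ends e).2) * (v (G.ends e).1 - v (G.ends e).2)) := by
  simp only [lap_eq_sum_vecMulVec, sum_mulVec, smul_mulVec, vecMulVec_mulVec, dotProduct_sum,
    dotProduct_smul, dipole_dotProduct, dotProduct_dipole, op_smul_eq_mul, smul_eq_mul]

theorem lap_transpose : G.lapᵀ = G.lap := by
  simp [lap_eq_sum_vecMulVec, transpose_sum, transpose_vecMulVec]

theorem dotProduct_lap_mulVec_comm (w v : G.V → ℝ) :
    w ⬝ᵥ G.lap *ᵥ v = v ⬝ᵥ G.lap *ᵥ w := by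
  simp only [dotProduct_lap_mulVec, mul_comm (w _ - w _)]

theorem dotProduct_lap_mulVec_self_nonneg (v : G.V → ℝ) : 0 ≤ v ⬝ᵥ G.lap *ᵥ v := by
  rw [dotProduct_lap_mulVec]
  exact Finset.sum_nonneg fun e _ => mul_nonneg (inv_pos.2 (G.len_pos e)).le (mul_self_nonneg _)

theorem lap_mulVec_const (c : ℝ) : G.lap *ᵥ (fun _ => c) = 0 :=
  eq_of_forall_dotProduct_eq fun w => by simp [dotProduct_lap_mulVec]

theorem lap_mul_meanMat : G.lap * meanMat G.V = 0 := by
  ext u v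
  simpa [meanMat, Matrix.mul_apply, mulVec, dotProduct] using
    congrFun (G.lap_mulVec_const (Fintype.card G.V : ℝ)⁻¹) u

theorem meanMat_mul_lap : meanMat G.V * G.lap = 0 := by
  rw [← transpose_transpose (meanMat G.V * G.lap), transpose_mul, lap_transpose,
    meanMat_transpose, lap_mul_meanMat, transpose_zero]

variable {G}

theorem Reach.symm {x y : G.V} (h : G.Reach x y) : G.Reach y x :=
  haveI : Std.Symm G.Adj := ⟨fun _ _ ⟨e, he⟩ => ⟨e, he.symm⟩⟩
  Std.Symm.symm (r := Relation.ReflTransGen G.Adj) _ _ h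

theorem eq_of_reach {v : G.V → ℝ} (hv : ∀ e, v (G.ends e).1 = v (G.ends e).2) {x y : G.V}
    (h : G.Reach x y) : v x = v y := by
  induction h with
  | refl => rfl
  | tail _ hadj ih =>
    obtain ⟨e, he⟩ := hadj
    have := hv e
    rcases he with he | he <;> rw [he] at this <;> rw [ih, this]

theorem const_of_dotProduct_lap_mulVec_self_eq_zero (hG : G.Connected) {v : G.V → ℝ}
    (hv : v ⬝ᵥ G.lap *ᵥ v = 0) (x y : G.V) : v x = v y := by
  rw [dotProduct_lap_mulVec, Finset.sum_eq_zero_iff_of_nonneg fun e _ =>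
    mul_nonneg (inv_pos.2 (G.len_pos e)).le (mul_self_nonneg _)] at hv
  refine eq_of_reach (fun e => ?_) (hG.2 x y)
  have := hv e (Finset.mem_univ e)
  simpa [(G.len_pos e).ne', sub_eq_zero] using this

theorem isUnit_det_lap_add_meanMat (hG : G.Connected) : IsUnit (G.lap + meanMat G.V).det := by
  have : Nonempty G.V := hG.1
  have hn : (0 : ℝ) < Fintype.card G.V := by exact_mod_cast Fintype.card_pos
  rw [isUnit_iff_ne_zero]
  intro hdet
  obtain ⟨v, hv0, hv⟩ := exists_mulVec_eq_zero_iff.2 hdet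
  have hsplit : v ⬝ᵥ G.lap *ᵥ v + (Fintype.card G.V : ℝ)⁻¹ * (∑ x, v x) ^ 2 = 0 := by
    have := congrArg (v ⬝ᵥ ·) hv
    simp only [add_mulVec, dotProduct_add, meanMat_mulVec, dotProduct_zero] at this
    rw [← this, dotProduct_comm v (fun _ => _)]
    simp only [dotProduct, ← Finset.sum_mul]
    ring
  have hL := G.dotProduct_lap_mulVec_self_nonneg v
  have hJ : 0 ≤ (Fintype.card G.V : ℝ)⁻¹ * (∑ x, v x) ^ 2 := by positivity
  have hsum : ∑ x, v x = 0 := by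
    simpa [hn.ne'] using (by linarith : (Fintype.card G.V : ℝ)⁻¹ * (∑ x, v x) ^ 2 = 0)
  have hconst :=
    const_of_dotProduct_lap_mulVec_self_eq_zero hG (by linarith : v ⬝ᵥ G.lap *ᵥ v = 0)
  refine hv0 (funext fun x => ?_)
  have : ∑ y, v y = Fintype.card G.V * v x := by simp [hconst _ x]
  simpa [hn.ne', hsum] using this

theorem mpinv_lap (hG : G.Connected) :
    G.lap.mpinv = (G.lap + meanMat G.V)⁻¹ - meanMat G.V :=
  haveI := hG.1
  mpinv_eq_inv_add_sub G.lap_mul_meanMat G.meanMat_mul_lap meanMat_mul_self meanMat_transpose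
    (isUnit_det_lap_add_meanMat hG)

theorem lap_mul_mpinv (hG : G.Connected) : G.lap * G.lap.mpinv = 1 - meanMat G.V :=
  haveI := hG.1
  mpinv_lap hG ▸ mul_inv_add_sub G.lap_mul_meanMat G.meanMat_mul_lap meanMat_mul_self
    (isUnit_det_lap_add_meanMat hG)

theorem mpinv_mul_lap (hG : G.Connected) : G.lap.mpinv * G.lap = 1 - meanMat G.V :=
  haveI := hG.1
  mpinv_lap hG ▸ inv_add_sub_mul G.lap_mul_meanMat G.meanMat_mul_lap meanMat_mul_self
    (isUnit_det_lap_add_meanMat hG)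

theorem mpinv_lap_apply_comm (hG : G.Connected) (u v : G.V) :
    G.lap.mpinv u v = G.lap.mpinv v u := by
  have h : G.lap.mpinvᵀ = G.lap.mpinv := by
    rw [mpinv_lap hG, transpose_sub, transpose_nonsing_inv, transpose_add, lap_transpose,
      meanMat_transpose]
  exact congrFun (congrFun h.symm u) v

theorem exists_lap_mulVec_eq_dipole (hG : G.Connected) (s t : G.V) :
    ∃ f, G.lap *ᵥ f = dipole s t :=
  ⟨G.lap.mpinv *ᵥ dipole s t, by
    rw [mulVec_mulVec, lap_mul_mpinv hG, sub_mulVec, one_mulVec, meanMat_mulVec, sum_dipole]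
    simp [Pi.zero_def]⟩

theorem dipole_dotProduct_mpinv_mulVec (hG : G.Connected) {f b : G.V → ℝ}
    (hf : G.lap *ᵥ f = b) (p q : G.V) : dipole p q ⬝ᵥ G.lap.mpinv *ᵥ b = f p - f q := by
  rw [← hf, mulVec_mulVec, mpinv_mul_lap hG, sub_mulVec, one_mulVec, dotProduct_sub,
    dipole_dotProduct, dipole_dotProduct, meanMat_mulVec]
  simp

theorem res_eq_of_lap_mulVec (hG : G.Connected) {f : G.V → ℝ} {s t : G.V}
    (hf : G.lap *ᵥ f = dipole s t) : G.res s t = f s - f t := by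
  have h := dipole_dotProduct_mpinv_mulVec hG hf s t
  rw [dipole_dotProduct_mulVec_dipole, mpinv_lap_apply_comm hG t s] at h
  rw [res]
  linarith

theorem volt_sub_volt_of_lap_mulVec (hG : G.Connected) {f : G.V → ℝ} {s t : G.V}
    (hf : G.lap *ᵥ f = dipole s t) (p q : G.V) : G.volt p q s - G.volt p q t = f q - f p := by
  have h := dipole_dotProduct_mpinv_mulVec hG hf p q
  rw [dipole_dotProduct_mulVec_dipole] at h
  rw [volt, volt]
  linarith

theorem volt_self (p s : G.V) : G.volt p p s = 0 := by
  rw [volt]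
  ring

theorem sub_nonneg_of_lap_mulVec_eq_dipole {g : G.V → ℝ} {p q : G.V}
    (hg : G.lap *ᵥ g = dipole p q) : 0 ≤ g p - g q := by
  rw [← dotProduct_dipole, ← hg]
  exact G.dotProduct_lap_mulVec_self_nonneg g

theorem res_nonneg (hG : G.Connected) (p q : G.V) : 0 ≤ G.res p q := by
  obtain ⟨g, hg⟩ := exists_lap_mulVec_eq_dipole hG p q
  rw [res_eq_of_lap_mulVec hG hg]
  exact sub_nonneg_of_lap_mulVec_eq_dipole hg

theorem res_pos (hG : G.Connected) {p q : G.V} (hpq : p ≠ q) : 0 < G.res p q := by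
  obtain ⟨g, hg⟩ := exists_lap_mulVec_eq_dipole hG p q
  rw [res_eq_of_lap_mulVec hG hg]
  refine (sub_nonneg_of_lap_mulVec_eq_dipole hg).lt_of_ne fun h0 => ?_
  have hconst := const_of_dotProduct_lap_mulVec_self_eq_zero hG (v := g)
    (by rw [hg, dotProduct_dipole, ← h0])
  have hzero : G.lap *ᵥ g = 0 := by
    rw [show g = fun _ => g p from funext fun x => hconst x p, lap_mulVec_const]
  simpa [dipole, ind, hpq] using congrFun (hg.symm.trans hzero) p

theorem dotProduct_lap_mulVec_delete (e : G.E) (w v : G.V → ℝ) :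
    w ⬝ᵥ G.lap *ᵥ v = w ⬝ᵥ (G.delete e).lap *ᵥ v +
      (G.len e)⁻¹ * ((w (G.ends e).1 - w (G.ends e).2) * (v (G.ends e).1 - v (G.ends e).2)) := by
  rw [dotProduct_lap_mulVec, Fintype.sum_eq_add_sum_subtype_ne _ e, add_comm]
  refine congrArg (· + _) (Eq.trans ?_ (dotProduct_lap_mulVec (G.delete e) w v).symm)
  exact Fintype.sum_equiv (ι := {f // f ≠ e}) (κ := (G.delete e).E) (.refl _) _ _ fun _ => rfl

theorem lap_mulVec_of_lap_delete_mulVec {e : G.E} {v b : G.V → ℝ}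
    (h : (G.delete e).lap *ᵥ v = b) :
    G.lap *ᵥ v = b +
      ((G.len e)⁻¹ * (v (G.ends e).1 - v (G.ends e).2)) • dipole (G.ends e).1 (G.ends e).2 :=
  eq_of_forall_dotProduct_eq fun w => by
    rw [dotProduct_lap_mulVec_delete e, dotProduct_add, dotProduct_smul, dotProduct_dipole,
      smul_eq_mul]
    exact congrArg₂ (· + ·) (congrArg (w ⬝ᵥ ·) h) (by ring)

theorem dotProduct_lap_mulVec_quot (H : WMG) (r : H.V → H.V → Prop)
    (w v : (H.quot r).V → ℝ) :
    w ⬝ᵥ (H.quot r).lap *ᵥ v = (w ∘ Quot.mk r) ⬝ᵥ H.lap *ᵥ (v ∘ Quot.mk r) := by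
  rw [dotProduct_lap_mulVec, dotProduct_lap_mulVec]
  rfl

theorem Adj.quot {H : WMG} (r : H.V → H.V → Prop) {x y : H.V} (h : H.Adj x y) :
    (H.quot r).Adj (Quot.mk r x) (Quot.mk r y) := by
  obtain ⟨f, hf | hf⟩ := h
  · exact ⟨f, Or.inl (show (Quot.mk r _, Quot.mk r _) = _ by rw [hf]; rfl)⟩
  · exact ⟨f, Or.inr (show (Quot.mk r _, Quot.mk r _) = _ by rw [hf]; rfl)⟩

theorem contractMap_ends (e : G.E) : G.contractMap e (G.ends e).1 = G.contractMap e (G.ends e).2 :=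
  Quot.sound ⟨rfl, rfl⟩

theorem Reach.contract (e : G.E) {x y : G.V} (h : G.Reach x y) :
    (G.contract e).Reach (G.contractMap e x) (G.contractMap e y) := by
  induction h with
  | refl => exact .refl
  | @tail b c _ hbc ih =>
    obtain ⟨f, hf⟩ := hbc
    by_cases hfe : f = e
    · subst hfe
      have h := G.contractMap_ends f
      rcases hf with hf | hf <;> rw [hf] at h
      · rwa [← h]
      · rwa [h]
    · exact ih.tail (Adj.quot _ ⟨⟨f, hfe⟩, hf⟩)

theorem contract_connected (hG : G.Connected) (e : G.E) : (G.contract e).Connected := by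
  refine ⟨hG.1.map (G.contractMap e), fun u v => ?_⟩
  induction u using Quot.ind
  induction v using Quot.ind
  exact (hG.2 _ _).contract e

theorem reach_or_reach_of_delete (hG : G.Connected) (e : G.E) (x : G.V) :
    (G.delete e).Reach x (G.ends e).1 ∨ (G.delete e).Reach x (G.ends e).2 := by
  induction hG.2 (G.ends e).1 x with
  | refl => exact .inl .refl
  | @tail b c _ hbc ih =>
    obtain ⟨f, hf⟩ := hbc
    by_cases hfe : f = e
    · subst hfe
      rcases hf with hf | hf <;> rw [hf]
      · exact .inr .refl
      · exact .inl .refl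
    · have hcb : (G.delete e).Adj c b := ⟨⟨f, hfe⟩, hf.symm⟩
      exact ih.imp (.head hcb) (.head hcb)

theorem connected_delete_of_reach (hG : G.Connected) {e : G.E}
    (h : (G.delete e).Reach (G.ends e).1 (G.ends e).2) : (G.delete e).Connected := by
  have hp : ∀ x, (G.delete e).Reach x (G.ends e).1 := fun x =>
    (reach_or_reach_of_delete hG e x).elim id (·.trans h.symm)
  exact ⟨hG.1, fun x y => (hp x).trans (hp y).symm⟩

noncomputable def componentIndicator (G : WMG) (x : G.V) : G.V → ℝ :=
  {y | G.Reach y x}.indicator 1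

theorem componentIndicator_of_reach {x y : G.V} (h : G.Reach y x) :
    G.componentIndicator x y = 1 :=
  Set.indicator_of_mem (s := {y | G.Reach y x}) h 1

theorem componentIndicator_of_not_reach {x y : G.V} (h : ¬ G.Reach y x) :
    G.componentIndicator x y = 0 :=
  Set.indicator_of_notMem (s := {y | G.Reach y x}) h 1

theorem Reach.componentIndicator_eq {x s t : G.V} (h : G.Reach s t) :
    G.componentIndicator x s = G.componentIndicator x t := by
  by_cases hs : G.Reach s x
  · rw [componentIndicator_of_reach hs, componentIndicator_of_reach (h.symm.trans hs)]
  · rw [componentIndicator_of_not_reach hs, componentIndicator_of_not_reach (hs ∘ h.trans)]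

theorem lap_mulVec_componentIndicator (x : G.V) : G.lap *ᵥ G.componentIndicator x = 0 :=
  eq_of_forall_dotProduct_eq fun w => by
    rw [dotProduct_lap_mulVec, dotProduct_zero]
    refine Finset.sum_eq_zero fun f _ => ?_
    rw [Reach.componentIndicator_eq (.single ⟨f, Or.inl rfl⟩), sub_self, mul_zero, mul_zero]

/-- A potential that takes the same value at both ends of `e` descends to the contraction. -/
theorem res_contract_eq_of_lap_mulVec (hG : G.Connected) {e : G.E} {u : G.V → ℝ} {s t : G.V}
    {β : ℝ} (hu : G.lap *ᵥ u = dipole s t + β • dipole (G.ends e).1 (G.ends e).2)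
    (hpq : u (G.ends e).1 = u (G.ends e).2) :
    (G.contract e).res (G.contractMap e s) (G.contractMap e t) = u s - u t := by
  let ū : (G.contract e).V → ℝ := Quot.lift u (by rintro _ _ ⟨rfl, rfl⟩; exact hpq)
  refine res_eq_of_lap_mulVec (contract_connected hG e) (f := ū)
    (eq_of_forall_dotProduct_eq fun w => ?_)
  have hw := congrArg w (G.contractMap_ends e)
  have h := dotProduct_lap_mulVec_delete e (w ∘ G.contractMap e) u
  rw [hu, hpq, sub_self, mul_zero, mul_zero, add_zero, dotProduct_add, dotProduct_smul,
    dotProduct_dipole, dotProduct_dipole] at h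
  simp only [Function.comp_apply, hw, sub_self, smul_zero, add_zero] at h
  rw [dotProduct_dipole]
  exact (dotProduct_lap_mulVec_quot _ _ w ū).trans h.symm

/-- Reciprocity: both sides equal `g ⬝ᵥ L f = f ⬝ᵥ L g`. -/
theorem sub_eq_sub_of_lap_mulVec_eq_dipole {f g : G.V → ℝ} {s t p q : G.V}
    (hf : G.lap *ᵥ f = dipole s t) (hg : G.lap *ᵥ g = dipole p q) : g s - g t = f p - f q := by
  rw [← dotProduct_dipole, ← hf, dotProduct_lap_mulVec_comm, hg, dotProduct_dipole]

section Delete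

variable {e : G.E} {f g : G.V → ℝ} {s t : G.V}

theorem lap_mulVec_sub_smul_of_lap_delete_mulVec
    (hf : (G.delete e).lap *ᵥ f = dipole s t)
    (hg : (G.delete e).lap *ᵥ g = dipole (G.ends e).1 (G.ends e).2) (c : ℝ) :
    G.lap *ᵥ (f - c • g) = dipole s t + ((G.len e)⁻¹ * (f (G.ends e).1 - f (G.ends e).2 -
      c * (g (G.ends e).1 - g (G.ends e).2)) - c) • dipole (G.ends e).1 (G.ends e).2 := by
  rw [mulVec_sub, mulVec_smul, lap_mulVec_of_lap_delete_mulVec hf,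
    lap_mulVec_of_lap_delete_mulVec hg]
  ext x
  simp only [Pi.add_apply, Pi.sub_apply, Pi.smul_apply, smul_eq_mul]
  ring

/-- With `c = D / (L + R)`, the current `(D - c R) / L` through `e` cancels the `-c • dipole p q`
coming from `c • g`. -/
theorem lap_mulVec_eq_dipole_of_lap_delete_mulVec
    (hf : (G.delete e).lap *ᵥ f = dipole s t)
    (hg : (G.delete e).lap *ᵥ g = dipole (G.ends e).1 (G.ends e).2) :
    G.lap *ᵥ (f - ((f (G.ends e).1 - f (G.ends e).2) /
      (G.len e + (g (G.ends e).1 - g (G.ends e).2))) • g) = dipole s t := by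
  have hL := G.len_pos e
  have hR := sub_nonneg_of_lap_mulVec_eq_dipole hg
  rw [lap_mulVec_sub_smul_of_lap_delete_mulVec hf hg]
  convert add_zero (dipole s t)
  rw [smul_eq_zero]
  left
  field_simp
  ring

theorem res_eq_of_lap_delete_mulVec (hG : G.Connected)
    (hf : (G.delete e).lap *ᵥ f = dipole s t)
    (hg : (G.delete e).lap *ᵥ g = dipole (G.ends e).1 (G.ends e).2) :
    G.res s t = f s - f t - (f (G.ends e).1 - f (G.ends e).2) /
      (G.len e + (g (G.ends e).1 - g (G.ends e).2)) * (g s - g t) := by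
  rw [res_eq_of_lap_mulVec hG (lap_mulVec_eq_dipole_of_lap_delete_mulVec hf hg)]
  simp only [Pi.sub_apply, Pi.smul_apply, smul_eq_mul]
  ring

theorem volt_sub_volt_eq_of_lap_delete_mulVec (hG : G.Connected)
    (hf : (G.delete e).lap *ᵥ f = dipole s t)
    (hg : (G.delete e).lap *ᵥ g = dipole (G.ends e).1 (G.ends e).2) :
    G.volt (G.ends e).1 (G.ends e).2 s - G.volt (G.ends e).1 (G.ends e).2 t =
      G.len e / (G.len e + (g (G.ends e).1 - g (G.ends e).2)) *
        (f (G.ends e).2 - f (G.ends e).1) := by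
  have hL := G.len_pos e
  have hR := sub_nonneg_of_lap_mulVec_eq_dipole hg
  rw [volt_sub_volt_of_lap_mulVec hG (lap_mulVec_eq_dipole_of_lap_delete_mulVec hf hg)]
  simp only [Pi.sub_apply, Pi.smul_apply, smul_eq_mul]
  field_simp
  ring

theorem res_contract_eq_of_lap_delete_mulVec (hG : G.Connected) {c : ℝ}
    (hf : (G.delete e).lap *ᵥ f = dipole s t)
    (hg : (G.delete e).lap *ᵥ g = dipole (G.ends e).1 (G.ends e).2)
    (hc : f (G.ends e).1 - f (G.ends e).2 = c * (g (G.ends e).1 - g (G.ends e).2)) :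
    (G.contract e).res (G.contractMap e s) (G.contractMap e t) = f s - f t - c * (g s - g t) := by
  rw [res_contract_eq_of_lap_mulVec hG (lap_mulVec_sub_smul_of_lap_delete_mulVec hf hg c)]
  · simp only [Pi.sub_apply, Pi.smul_apply, smul_eq_mul]
    ring
  · simp only [Pi.sub_apply, Pi.smul_apply, smul_eq_mul]
    linarith

end Delete

section NonBridge

variable {e : G.E}

theorem res_eq_res_contract_add_volt_delete (hG : G.Connected) (he : ¬ G.IsBridge e)
    (s t : G.V) :
    G.res s t = (G.contract e).res (G.contractMap e s) (G.contractMap e t) +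
      (G.len e / ((G.delete e).res (G.ends e).1 (G.ends e).2 *
        (G.len e + (G.delete e).res (G.ends e).1 (G.ends e).2))) *
        ((G.delete e).volt (G.ends e).1 (G.ends e).2 s -
          (G.delete e).volt (G.ends e).1 (G.ends e).2 t) ^ 2 := by
  have hH : (G.delete e).Connected := not_not.1 he
  -- typed over `G.V` (only definitionally the vertex type of `G - e`), so that rewriting works
  obtain ⟨f, hf⟩ : ∃ f : G.V → ℝ, _ := exists_lap_mulVec_eq_dipole hH s t
  obtain ⟨g, hg⟩ : ∃ g : G.V → ℝ, _ :=
    exists_lap_mulVec_eq_dipole hH (G.ends e).1 (G.ends e).2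
  have hR := res_eq_of_lap_mulVec hH hg
  -- `g p - g q = 0` only when `e` is a loop, and then also `f p - f q = 0`
  have hc : f (G.ends e).1 - f (G.ends e).2 = (f (G.ends e).1 - f (G.ends e).2) /
      (g (G.ends e).1 - g (G.ends e).2) * (g (G.ends e).1 - g (G.ends e).2) := by
    rcases eq_or_ne (G.ends e).1 (G.ends e).2 with hpq | hpq
    · simp [hpq]
    · have := hR ▸ res_pos hH hpq
      field_simp
  rw [res_eq_of_lap_delete_mulVec hG hf hg, res_contract_eq_of_lap_delete_mulVec hG hf hg hc, hR,
    volt_sub_volt_of_lap_mulVec hH hf (G.ends e).1 (G.ends e).2,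
    sub_eq_sub_of_lap_mulVec_eq_dipole hf hg, ← neg_sub (f (G.ends e).1)]
  have hL := G.len_pos e
  have hR0 := sub_nonneg_of_lap_mulVec_eq_dipole hg
  generalize f (G.ends e).1 - f (G.ends e).2 = D at hc ⊢
  generalize g (G.ends e).1 - g (G.ends e).2 = R at hc hR0 ⊢
  rcases hR0.eq_or_lt with rfl | hR0
  · obtain rfl : D = 0 := by simpa using hc
    simp
  · field_simp
    ring

theorem volt_sub_volt_eq_of_not_isBridge (hG : G.Connected) (he : ¬ G.IsBridge e)
    (s t : G.V) :
    G.volt (G.ends e).1 (G.ends e).2 s - G.volt (G.ends e).1 (G.ends e).2 t =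
      G.len e / (G.len e + (G.delete e).res (G.ends e).1 (G.ends e).2) *
        ((G.delete e).volt (G.ends e).1 (G.ends e).2 s -
          (G.delete e).volt (G.ends e).1 (G.ends e).2 t) := by
  have hH : (G.delete e).Connected := not_not.1 he
  obtain ⟨f, hf⟩ : ∃ f : G.V → ℝ, _ := exists_lap_mulVec_eq_dipole hH s t
  obtain ⟨g, hg⟩ : ∃ g : G.V → ℝ, _ :=
    exists_lap_mulVec_eq_dipole hH (G.ends e).1 (G.ends e).2
  rw [volt_sub_volt_eq_of_lap_delete_mulVec hG hf hg, res_eq_of_lap_mulVec hH hg,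
    volt_sub_volt_of_lap_mulVec hH hf (G.ends e).1 (G.ends e).2]

theorem res_eq_res_contract_add_volt (hG : G.Connected) (he : ¬ G.IsBridge e)
    (s t : G.V) :
    G.res s t = (G.contract e).res (G.contractMap e s) (G.contractMap e t) +
      ((G.len e + (G.delete e).res (G.ends e).1 (G.ends e).2) /
        (G.len e * (G.delete e).res (G.ends e).1 (G.ends e).2)) *
        (G.volt (G.ends e).1 (G.ends e).2 s - G.volt (G.ends e).1 (G.ends e).2 t) ^ 2 := by
  rw [res_eq_res_contract_add_volt_delete hG he, volt_sub_volt_eq_of_not_isBridge hG he]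
  have hL := G.len_pos e
  have hR := res_nonneg (not_not.1 he) (G.ends e).1 (G.ends e).2
  rcases hR.eq_or_lt with hR | hR
  · simp [← hR]
  · field_simp

theorem res_contract_le_res (hG : G.Connected) (he : ¬ G.IsBridge e)
    (s t : G.V) :
    (G.contract e).res (G.contractMap e s) (G.contractMap e t) ≤ G.res s t := by
  have hL := G.len_pos e
  have hR := res_nonneg (not_not.1 he) (G.ends e).1 (G.ends e).2
  rw [res_eq_res_contract_add_volt_delete hG he]
  exact le_add_of_nonneg_right
    (mul_nonneg (div_nonneg hL.le (mul_nonneg hR (by positivity))) (sq_nonneg _))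

theorem res_eq_res_contract_iff (hG : G.Connected) (he : ¬ G.IsBridge e)
    (s t : G.V) :
    G.res s t = (G.contract e).res (G.contractMap e s) (G.contractMap e t) ↔
      G.volt (G.ends e).1 (G.ends e).2 s = G.volt (G.ends e).1 (G.ends e).2 t := by
  rw [res_eq_res_contract_add_volt hG he, add_eq_left, ← sub_eq_zero (a := G.volt _ _ s)]
  rcases eq_or_ne (G.ends e).1 (G.ends e).2 with hpq | hpq
  · simp [hpq, volt_self]
  · have hL := G.len_pos e
    have hR := res_pos (not_not.1 he) hpq
    simp [hL.ne', hR.ne', (add_pos hL hR).ne']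

end NonBridge

section Bridge

variable {e : G.E}

theorem not_reach_of_isBridge (hG : G.Connected) (he : G.IsBridge e) :
    ¬ (G.delete e).Reach (G.ends e).1 (G.ends e).2 :=
  fun h => he (connected_delete_of_reach hG h)

theorem res_eq_res_contract_add_of_isBridge (hG : G.Connected) (he : G.IsBridge e)
    (s t : G.V) :
    G.res s t = (G.contract e).res (G.contractMap e s) (G.contractMap e t) + G.len e *
      ((G.delete e).componentIndicator (G.ends e).1 s -
        (G.delete e).componentIndicator (G.ends e).1 t) ^ 2 := by
  set χ : G.V → ℝ := (G.delete e).componentIndicator (G.ends e).1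
  have hχp : χ (G.ends e).1 = 1 := componentIndicator_of_reach .refl
  have hχq : χ (G.ends e).2 = 0 :=
    componentIndicator_of_not_reach fun h => not_reach_of_isBridge hG he h.symm
  have hL := (G.len_pos e).ne'
  -- `L χ` is the potential of the unit current from `p` to `q`: all of it flows through `e`
  have hχ : G.lap *ᵥ (G.len e • χ) = dipole (G.ends e).1 (G.ends e).2 := by
    have h0 : (G.delete e).lap *ᵥ χ = (0 : G.V → ℝ) := lap_mulVec_componentIndicator _
    rw [mulVec_smul, lap_mulVec_of_lap_delete_mulVec h0, hχp, hχq, zero_add, smul_smul]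
    field_simp
    simp
  obtain ⟨f, hf⟩ := exists_lap_mulVec_eq_dipole hG s t
  have hD := sub_eq_sub_of_lap_mulVec_eq_dipole hf hχ
  simp only [Pi.smul_apply, smul_eq_mul] at hD
  set c := (f (G.ends e).1 - f (G.ends e).2) / G.len e
  have hu : G.lap *ᵥ (f - c • G.len e • χ) =
      dipole s t + (-c) • dipole (G.ends e).1 (G.ends e).2 := by
    rw [mulVec_sub, mulVec_smul, hf, hχ, neg_smul, sub_eq_add_neg]
  rw [res_eq_of_lap_mulVec hG hf, res_contract_eq_of_lap_mulVec hG hu]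
  · simp only [Pi.sub_apply, Pi.smul_apply, smul_eq_mul, c, ← hD]
    field_simp
    ring
  · simp only [Pi.sub_apply, Pi.smul_apply, smul_eq_mul, hχp, hχq, c]
    field_simp
    ring

theorem res_eq_res_contract_of_isBridge_of_reach (hG : G.Connected) (he : G.IsBridge e)
    {s t : G.V} (h : (G.delete e).Reach s t) :
    G.res s t = (G.contract e).res (G.contractMap e s) (G.contractMap e t) := by
  rw [res_eq_res_contract_add_of_isBridge hG he,
    Reach.componentIndicator_eq (G := G.delete e) (x := (G.ends e).1) h, sub_self]
  ring

theorem res_eq_res_contract_add_len_of_isBridge (hG : G.Connected) (he : G.IsBridge e)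
    {s t : G.V} (h : ¬ (G.delete e).Reach s t) :
    G.res s t = (G.contract e).res (G.contractMap e s) (G.contractMap e t) + G.len e := by
  rw [res_eq_res_contract_add_of_isBridge hG he]
  rcases reach_or_reach_of_delete hG e s with hs | hs <;>
    rcases reach_or_reach_of_delete hG e t with ht | ht
  · exact absurd (hs.trans ht.symm) h
  · rw [componentIndicator_of_reach hs,
      componentIndicator_of_not_reach fun ht' => h (hs.trans ht'.symm)]
    ring
  · rw [componentIndicator_of_reach ht,
      componentIndicator_of_not_reach fun hs' => h (hs'.trans ht.symm)]
    ring
  · exact absurd (hs.trans ht.symm) h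

end Bridge

end WMG

/-- **Explicit Rayleigh's Monotonicity Law I.**  Let `e` be an edge of the
finite connected weighted graph `G` with endpoints `p_i, q_i` and length `L_i`.
If `e` is not a bridge, then for all vertices `s, t`:
`r(s,t) = r_{Ḡ_e}(s,t) + ((L_i+R_i)/(L_i R_i)) (j_{p_i}(q_i,s) - j_{p_i}(q_i,t))²
        = r_{Ḡ_e}(s,t) + (L_i/(R_i (L_i+R_i))) (j^{G-e}_{p_i}(q_i,s) - j^{G-e}_{p_i}(q_i,t))²`,
in particular `r(s,t) ≥ r_{Ḡ_e}(s,t)` with equality iff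
`j_{p_i}(q_i,s) = j_{p_i}(q_i,t)`.  If `e` is a bridge then
`r(s,t) = r_{Ḡ_e}(s,t)` when `s, t` are in the same connected component of
`G − e`, and `r(s,t) = r_{Ḡ_e}(s,t) + L_i` otherwise. -/
theorem explicit_rayleigh_monotonicity_law_I (G : WMG) (hG : G.Connected)
    (e : G.E) (s t : G.V) :
    (¬ G.IsBridge e →
      (G.res s t = (G.contract e).res (G.contractMap e s) (G.contractMap e t) +
          ((G.len e + (G.delete e).res (G.ends e).1 (G.ends e).2) /
            (G.len e * (G.delete e).res (G.ends e).1 (G.ends e).2)) *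
            (G.volt (G.ends e).1 (G.ends e).2 s -
             G.volt (G.ends e).1 (G.ends e).2 t) ^ 2) ∧
      (G.res s t = (G.contract e).res (G.contractMap e s) (G.contractMap e t) +
          (G.len e / ((G.delete e).res (G.ends e).1 (G.ends e).2 *
            (G.len e + (G.delete e).res (G.ends e).1 (G.ends e).2))) *
            ((G.delete e).volt (G.ends e).1 (G.ends e).2 s -
             (G.delete e).volt (G.ends e).1 (G.ends e).2 t) ^ 2) ∧
      (G.contract e).res (G.contractMap e s) (G.contractMap e t) ≤ G.res s t ∧
      (G.res s t = (G.contract e).res (G.contractMap e s) (G.contractMap e t) ↔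
        G.volt (G.ends e).1 (G.ends e).2 s = G.volt (G.ends e).1 (G.ends e).2 t)) ∧
    (G.IsBridge e →
      ((G.delete e).Reach s t →
        G.res s t = (G.contract e).res (G.contractMap e s) (G.contractMap e t)) ∧
      (¬ (G.delete e).Reach s t →
        G.res s t = (G.contract e).res (G.contractMap e s) (G.contractMap e t) +
          G.len e)) :=
  ⟨fun he => ⟨WMG.res_eq_res_contract_add_volt hG he s t,
      WMG.res_eq_res_contract_add_volt_delete hG he s t, WMG.res_contract_le_res hG he s t,
      WMG.res_eq_res_contract_iff hG he s t⟩,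
    fun he => ⟨WMG.res_eq_res_contract_of_isBridge_of_reach hG he,
      WMG.res_eq_res_contract_add_len_of_isBridge hG he⟩⟩
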